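/- arXiv:2004.06934 — 2 statements merged into one kernel-verified Lean document; each statement's English description precedes it below -/
import Mathlib

section
/- In GL, the implication [Σ(φ ∧ Box φ) and Σ(φ ∧ Box ¬φ) together imply Σ(φ)] holds if and only if [Σ(φ ∧ Box φ) implies Σ(φ)] or GL ⊢ φ → Diamond ⊤. Here Σ(ψ) abbreviates: ψ is GL-equivalent to a (possibly empty) disjunction of Box-formulas. -/
/-- Formulas of basic modal (provability) logic. -/
inductive GF : Type
  | bot : GF
  | var : ℕ → GF
  | impl : GF → GF → GF
  | box : GF → GF

namespace GF
def neg (φ : GF) : GF := φ.impl bot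
def conj (φ ψ : GF) : GF := (φ.impl ψ.neg).neg
def disj (φ ψ : GF) : GF := φ.neg.impl ψ
def top : GF := neg bot
def dia (φ : GF) : GF := (box φ.neg).neg
def iff (φ ψ : GF) : GF := (φ.impl ψ).conj (ψ.impl φ)
end GF

/-- Hilbert-style provability in Gödel–Löb logic GL. -/
inductive GLProof : GF → Prop
  | k1 (φ ψ : GF) : GLProof (φ.impl (ψ.impl φ))
  | k2 (φ ψ χ : GF) : GLProof ((φ.impl (ψ.impl χ)).impl ((φ.impl ψ).impl (φ.impl χ)))
  | dne (φ : GF) : GLProof ((φ.neg.neg).impl φ)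
  | K (φ ψ : GF) : GLProof ((GF.box (φ.impl ψ)).impl ((GF.box φ).impl (GF.box ψ)))
  | loeb (φ : GF) : GLProof ((GF.box ((GF.box φ).impl φ)).impl (GF.box φ))
  | mp {φ ψ} : GLProof (φ.impl ψ) → GLProof φ → GLProof ψ
  | nec {φ} : GLProof φ → GLProof (GF.box φ)

/-- Disjunction Box C₁ ∨ … ∨ Box Cₙ of boxed formulas (empty disjunction is ⊥). -/
def bigDisjBox (Cs : List GF) : GF := (Cs.map GF.box).foldr GF.disj GF.bot

/-- ψ is (syntactically) Σ in GL: GL-equivalent to a disjunction of Box-formulas. -/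
def SigmaGL (ψ : GF) : Prop := ∃ Cs : List GF, GLProof (ψ.iff (bigDisjBox Cs))

namespace GLAux
open GLProof

lemma glid (A : GF) : GLProof (A.impl A) :=
  mp (mp (k2 A (A.impl A) A) (k1 A (A.impl A))) (k1 A A)

/-- Provability from a list of hypotheses. -/
inductive GLC : List GF → GF → Prop
  | ax {Γ : List GF} {φ : GF} : GLProof φ → GLC Γ φ
  | hyp {Γ : List GF} {φ : GF} : φ ∈ Γ → GLC Γ φ
  | mp {Γ : List GF} {φ ψ : GF} : GLC Γ (φ.impl ψ) → GLC Γ φ → GLC Γ ψ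

lemma ded' {Δ : List GF} {B : GF} (h : GLC Δ B) :
    ∀ (Γ : List GF) (A : GF), Δ = A :: Γ → GLC Γ (A.impl B) := by
  induction h with
  | ax h => intro Γ A _; exact GLC.ax (mp (k1 _ _) h)
  | hyp hm =>
      intro Γ A hΔ; subst hΔ
      rcases List.mem_cons.mp hm with h | h
      · subst h; exact GLC.ax (glid _)
      · exact GLC.mp (GLC.ax (k1 _ _)) (GLC.hyp h)
  | mp _ _ ih1 ih2 =>
      intro Γ A hΔ
      exact GLC.mp (GLC.mp (GLC.ax (k2 _ _ _)) (ih1 Γ A hΔ)) (ih2 Γ A hΔ)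

lemma ded {Γ : List GF} {A B : GF} (h : GLC (A :: Γ) B) : GLC Γ (A.impl B) := ded' h Γ A rfl

lemma toGL' {Δ : List GF} {B : GF} (h : GLC Δ B) : Δ = [] → GLProof B := by
  induction h with
  | ax h => intro _; exact h
  | hyp hm => intro hΔ; subst hΔ; simp at hm
  | mp _ _ ih1 ih2 => intro hΔ; exact mp (ih1 hΔ) (ih2 hΔ)

lemma toGL {B : GF} (h : GLC [] B) : GLProof B := toGL' h rfl

lemma imp_trans {A B C : GF} (h1 : GLProof (A.impl B)) (h2 : GLProof (B.impl C)) :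
    GLProof (A.impl C) :=
  toGL (ded (GLC.mp (GLC.ax h2) (GLC.mp (GLC.ax h1) (GLC.hyp (List.Mem.head _)))))

lemma contract {A B : GF} (h : GLProof (A.impl (A.impl B))) : GLProof (A.impl B) :=
  toGL (ded (GLC.mp (GLC.mp (GLC.ax h) (GLC.hyp (List.Mem.head _)))
    (GLC.hyp (List.Mem.head _))))

lemma efq (A : GF) : GLProof (GF.bot.impl A) := imp_trans (k1 GF.bot A.neg) (dne A)

lemma dni (A : GF) : GLProof (A.impl A.neg.neg) :=
  toGL (ded (ded (GLC.mp (GLC.hyp (List.Mem.head _))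
    (GLC.hyp (List.Mem.tail _ (List.Mem.head _))))))

lemma mono_box {A B : GF} (h : GLProof (A.impl B)) : GLProof ((GF.box A).impl (GF.box B)) :=
  mp (K A B) (nec h)

lemma contra {A B : GF} (h : GLProof (A.impl B)) : GLProof (B.neg.impl A.neg) :=
  toGL (ded (ded (GLC.mp (GLC.hyp (List.Mem.tail _ (List.Mem.head _)))
    (GLC.mp (GLC.ax h) (GLC.hyp (List.Mem.head _))))))

lemma and_left (A B : GF) : GLProof ((A.conj B).impl A) := by
  apply toGL; apply ded
  have d4 : GLC [A, A.neg, A.conj B] B.neg :=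
    GLC.mp (GLC.ax (efq B.neg))
      (GLC.mp (GLC.hyp (List.Mem.tail _ (List.Mem.head _))) (GLC.hyp (List.Mem.head _)))
  have d2 : GLC [A.neg, A.conj B] GF.bot :=
    GLC.mp (GLC.hyp (List.Mem.tail _ (List.Mem.head _))) (ded d4)
  exact GLC.mp (GLC.ax (dne A)) (ded d2)

lemma and_right (A B : GF) : GLProof ((A.conj B).impl B) := by
  apply toGL; apply ded
  have d2 : GLC [B.neg, A.conj B] GF.bot :=
    GLC.mp (GLC.hyp (List.Mem.tail _ (List.Mem.head _)))
      (GLC.mp (GLC.ax (k1 B.neg A)) (GLC.hyp (List.Mem.head _)))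
  exact GLC.mp (GLC.ax (dne B)) (ded d2)

lemma and_intro_thm (A B : GF) : GLProof (A.impl (B.impl (A.conj B))) := by
  apply toGL; apply ded; apply ded; apply ded
  exact GLC.mp
    (GLC.mp (GLC.hyp (List.Mem.head _))
      (GLC.hyp (List.Mem.tail _ (List.Mem.tail _ (List.Mem.head _)))))
    (GLC.hyp (List.Mem.tail _ (List.Mem.head _)))

lemma and_intro {A B : GF} (h1 : GLProof A) (h2 : GLProof B) : GLProof (A.conj B) :=
  mp (mp (and_intro_thm A B) h1) h2

lemma and_intro_imp {X A B : GF} (h1 : GLProof (X.impl A)) (h2 : GLProof (X.impl B)) :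
    GLProof (X.impl (A.conj B)) :=
  toGL (ded (GLC.mp (GLC.mp (GLC.ax (and_intro_thm A B))
    (GLC.mp (GLC.ax h1) (GLC.hyp (List.Mem.head _))))
    (GLC.mp (GLC.ax h2) (GLC.hyp (List.Mem.head _)))))

lemma iff_intro {A B : GF} (h1 : GLProof (A.impl B)) (h2 : GLProof (B.impl A)) :
    GLProof (A.iff B) := and_intro h1 h2

lemma iff_mp {A B : GF} (h : GLProof (A.iff B)) : GLProof (A.impl B) := mp (and_left _ _) h
lemma iff_mpr {A B : GF} (h : GLProof (A.iff B)) : GLProof (B.impl A) := mp (and_right _ _) h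

lemma disj_inl (A B : GF) : GLProof (A.impl (A.disj B)) := by
  apply toGL; apply ded; apply ded
  exact GLC.mp (GLC.ax (efq B))
    (GLC.mp (GLC.hyp (List.Mem.head _)) (GLC.hyp (List.Mem.tail _ (List.Mem.head _))))

lemma boxbot_box (D : GF) : GLProof ((GF.box GF.bot).impl (GF.box D)) := mono_box (efq D)

lemma boxbot_disj (C : GF) (rest : List GF) :
    GLProof ((GF.box GF.bot).impl (bigDisjBox (C :: rest))) :=
  imp_trans (boxbot_box C) (disj_inl (GF.box C) (bigDisjBox rest))

lemma collapse (h : GLProof (GF.box GF.bot).neg) : GLProof GF.bot :=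
  mp h (mp (loeb GF.bot) (nec h))

lemma toDia {A : GF} (h : GLProof (A.impl (GF.box GF.bot).neg)) :
    GLProof (A.impl GF.top.dia) :=
  imp_trans h (contra (mono_box (dne GF.bot)))

lemma fromDia {A : GF} (h : GLProof (A.impl GF.top.dia)) :
    GLProof (A.impl (GF.box GF.bot).neg) :=
  imp_trans h (contra (mono_box (dni GF.bot)))

end GLAux

open GLAux GLProof in
/-- [Σ(φ ∧ Box φ) and Σ(φ ∧ Box ¬φ) imply Σ(φ)] iff
[Σ(φ ∧ Box φ) implies Σ(φ)] or GL ⊢ φ → Diamond ⊤. -/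
theorem gl_sigma_characterization (φ : GF) :
    ((SigmaGL (φ.conj (GF.box φ)) ∧ SigmaGL (φ.conj (GF.box φ.neg))) → SigmaGL φ) ↔
      ((SigmaGL (φ.conj (GF.box φ)) → SigmaGL φ) ∨
        GLProof (φ.impl GF.top.dia)) := by
  constructor
  · intro H
    by_cases hd : GLProof (φ.impl GF.top.dia)
    · exact Or.inr hd
    · left
      intro hS1
      obtain ⟨Cs, h⟩ := hS1
      cases Cs with
      | nil =>
          exfalso; apply hd
          have h1 : GLProof ((φ.conj (GF.box φ)).impl GF.bot) := iff_mp h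
          apply toDia
          apply toGL; apply GLAux.ded; apply GLAux.ded
          exact GLC.mp (GLC.ax h1)
            (GLC.mp (GLC.mp (GLC.ax (and_intro_thm φ (GF.box φ)))
              (GLC.hyp (List.Mem.tail _ (List.Mem.head _))))
              (GLC.mp (GLC.ax (boxbot_box φ)) (GLC.hyp (List.Mem.head _))))
      | cons C rest =>
          have hb : GLProof ((GF.box GF.bot).impl φ) :=
            imp_trans (imp_trans (boxbot_disj C rest) (iff_mpr h)) (and_left φ (GF.box φ))
          have fwd : GLProof ((φ.conj (GF.box φ.neg)).impl (GF.box GF.bot)) :=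
            imp_trans (and_right φ (GF.box φ.neg))
              (imp_trans (mono_box (contra hb)) (loeb GF.bot))
          have bwd : GLProof ((GF.box GF.bot).impl (φ.conj (GF.box φ.neg))) :=
            and_intro_imp hb (boxbot_box φ.neg)
          refine H ⟨⟨C :: rest, h⟩, ⟨[GF.bot], ?_⟩⟩
          exact iff_intro (imp_trans fwd (dni (GF.box GF.bot)))
            (imp_trans (dne (GF.box GF.bot)) bwd)
  · intro h
    rintro ⟨hS1, hS2⟩
    rcases h with h | hd
    · exact h hS1
    · obtain ⟨Cs, h2⟩ := hS2
      cases Cs with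
      | nil =>
          have h3 : GLProof ((φ.conj (GF.box φ.neg)).impl GF.bot) := iff_mp h2
          have h4 : GLProof ((GF.box φ.neg).impl φ.neg) := by
            apply toGL; apply GLAux.ded; apply GLAux.ded
            exact GLC.mp (GLC.ax h3)
              (GLC.mp (GLC.mp (GLC.ax (and_intro_thm φ (GF.box φ.neg)))
                (GLC.hyp (List.Mem.head _)))
                (GLC.hyp (List.Mem.tail _ (List.Mem.head _))))
          have h5 : GLProof φ.neg := GLProof.mp h4 (GLProof.mp (loeb φ.neg) (nec h4))
          exact ⟨[], iff_intro h5 (efq φ)⟩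
      | cons C rest =>
          have hb : GLProof ((GF.box GF.bot).impl φ) :=
            imp_trans (imp_trans (boxbot_disj C rest) (iff_mpr h2))
              (and_left φ (GF.box φ.neg))
          have hc : GLProof (φ.impl (GF.box GF.bot).neg) := fromDia hd
          have hF : GLProof GF.bot := collapse (contract (imp_trans hb hc))
          exact ⟨[], iff_intro (GLProof.mp (k1 GF.bot φ) hF) (efq φ)⟩
end

section
/- Every quasi-IL(M)-frame G = ⟨W, R, S, ν⟩ can be extended (keeping the same universe W and labeling ν, only enlarging R and S) to an adequate labeled IL(M)-frame F, i.e. an IL-frame satisfying the IL(M) frame condition y S_x z R u → y R u, with ν(y) ⊆_Box ν(z) whenever y S_x z, satisfying adequacy: x R y → ν(x) ≺ ν(y), distinct generalized cones are disjoint, and y in the A-critical cone of x implies ν(x) ≺_A ν(y). -/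
/-- Formulas of interpretability logic: ⊥, variables, →, Box, ▷. -/
inductive Formula : Type
  | bot : Formula
  | var : ℕ → Formula
  | impl : Formula → Formula → Formula
  | box : Formula → Formula
  | rhd : Formula → Formula → Formula

namespace Formula
def neg (φ : Formula) : Formula := φ.impl bot
def conj (φ ψ : Formula) : Formula := (φ.impl ψ.neg).neg
def disj (φ ψ : Formula) : Formula := φ.neg.impl ψ
def top : Formula := neg bot
def dia (φ : Formula) : Formula := ((box φ.neg)).neg
end Formula

open Formula

/-- Hilbert-style provability in IL extended with a set `Ax` of extra axioms. -/
inductive ILProof (Ax : Set Formula) : Formula → Prop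
  | ax {φ} : φ ∈ Ax → ILProof Ax φ
  | k1 (φ ψ : Formula) : ILProof Ax (φ.impl (ψ.impl φ))
  | k2 (φ ψ χ : Formula) : ILProof Ax ((φ.impl (ψ.impl χ)).impl ((φ.impl ψ).impl (φ.impl χ)))
  | dne (φ : Formula) : ILProof Ax ((φ.neg.neg).impl φ)
  | L1 (φ ψ : Formula) : ILProof Ax ((box (φ.impl ψ)).impl ((box φ).impl (box ψ)))
  | L2 (φ : Formula) : ILProof Ax ((box φ).impl (box (box φ)))
  | L3 (φ : Formula) : ILProof Ax ((box ((box φ).impl φ)).impl (box φ))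
  | J1 (φ ψ : Formula) : ILProof Ax ((box (φ.impl ψ)).impl (rhd φ ψ))
  | J2 (φ ψ χ : Formula) : ILProof Ax (((rhd φ ψ).conj (rhd ψ χ)).impl (rhd φ χ))
  | J3 (φ ψ χ : Formula) : ILProof Ax (((rhd φ χ).conj (rhd ψ χ)).impl (rhd (φ.disj ψ) χ))
  | J4 (φ ψ : Formula) : ILProof Ax ((rhd φ ψ).impl ((dia φ).impl (dia ψ)))
  | J5 (φ : Formula) : ILProof Ax (rhd (dia φ) φ)
  | mp {φ ψ} : ILProof Ax (φ.impl ψ) → ILProof Ax φ → ILProof Ax ψ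
  | nec {φ} : ILProof Ax φ → ILProof Ax (box φ)

/-- Montagna's principle M as a set of axiom instances. -/
def Mschema : Set Formula :=
  {φ | ∃ A B C : Formula,
    φ = (rhd A B).impl (rhd (A.conj (box C)) (B.conj (box C)))}

/-- Provability in IL(M). -/
def ILMProvable (φ : Formula) : Prop := ILProof Mschema φ

/-- A set of formulas is IL(X)-consistent if no finite list of its members
implies ⊥ (as an iterated implication) provably in IL(X). -/
def Consistent (Ax : Set Formula) (Γ : Set Formula) : Prop :=
  ¬ ∃ L : List Formula, (∀ ψ ∈ L, ψ ∈ Γ) ∧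
      ILProof Ax (L.foldr Formula.impl Formula.bot)

/-- Maximal IL(X)-consistent set. -/
def MCS (Ax : Set Formula) (Γ : Set Formula) : Prop :=
  Consistent Ax Γ ∧ ∀ φ : Formula, φ ∈ Γ ∨ φ.neg ∈ Γ

/-- The successor relation Γ ≺ Δ. -/
def prec (Γ Δ : Set Formula) : Prop :=
  ∀ A : Formula, box A ∈ Γ → A ∈ Δ ∧ box A ∈ Δ

/-- The C-critical successor relation Γ ≺_C Δ. -/
def critSucc (C : Formula) (Γ Δ : Set Formula) : Prop :=
  ∀ A : Formula, rhd A C ∈ Γ → A.neg ∈ Δ ∧ box A.neg ∈ Δ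

/-- Box-inclusion Γ ⊆_Box Δ. -/
def boxSub (Γ Δ : Set Formula) : Prop :=
  ∀ A : Formula, box A ∈ Γ → box A ∈ Δ

/-- A labeled frame: worlds labeled by sets of formulas and (some) R-edges
labeled by formulas. -/
structure LabFrame where
  W : Type
  R : W → W → Prop
  S : W → W → W → Prop   -- `S x y z` means y S_x z
  nu : W → Set Formula
  edge : W → W → Option Formula

/-- The A-critical cone above x. -/
inductive CritCone (F : LabFrame) (x : F.W) (A : Formula) : F.W → Prop
  | base {y} : F.edge x y = some A → CritCone F x A y
  | s {y z} : CritCone F x A y → F.S x y z → CritCone F x A z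
  | r {y z} : CritCone F x A y → F.R y z → CritCone F x A z

/-- The generalized A-cone above x. -/
inductive GenCone (F : LabFrame) (x : F.W) (A : Formula) : F.W → Prop
  | base {y} : CritCone F x A y → GenCone F x A y
  | s {w y z} : GenCone F x A y → F.S w y z → GenCone F x A z
  | r {y z} : GenCone F x A y → F.R y z → GenCone F x A z

/-- Transitive closure of the (unindexed) S relation. -/
def Str (F : LabFrame) : F.W → F.W → Prop :=
  Relation.TransGen (fun a b => ∃ w, F.S w a b)

/-- Transitive closure of R. -/
def Rtr (F : LabFrame) : F.W → F.W → Prop := Relation.TransGen F.R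

/-- The A-critical M-cone above x. -/
inductive MCone (F : LabFrame) (x : F.W) (A : Formula) : F.W → Prop
  | base {y} : F.edge x y = some A → MCone F x A y
  | r {y z} : MCone F x A y → F.R y z → MCone F x A z
  | s {y z} : MCone F x A y → F.S x y z → MCone F x A z
  | str {y u v} : MCone F x A y → Str F y u → F.R u v → MCone F x A v

/-- A relation is conversely well-founded. -/
def ConvWF {α : Type} (r : α → α → Prop) : Prop :=
  WellFounded (fun a b => r b a)

/-- Quasi-IL(M)-frames. -/
def QuasiILM (F : LabFrame) : Prop :=
  (∀ x, MCS Mschema (F.nu x)) ∧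
  ConvWF F.R ∧
  (∀ x y z, F.S x y z → F.R x y ∧ F.R x z) ∧
  (∀ x y, F.R x y → prec (F.nu x) (F.nu y)) ∧
  (∀ x (A B : Formula), A ≠ B → ∀ y, ¬ (GenCone F x A y ∧ GenCone F x B y)) ∧
  (∀ x A y, CritCone F x A y → critSucc A (F.nu x) (F.nu y)) ∧
  ConvWF (fun a b => ∃ c, Rtr F a c ∧ Str F c b) ∧
  (∀ x y z, F.S x y z → boxSub (F.nu y) (F.nu z)) ∧
  (∀ x A y, MCone F x A y → critSucc A (F.nu x) (F.nu y))

/-- Adequate labeled IL(M)-frames. -/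
def AdequateILM (F : LabFrame) : Prop :=
  (∀ x, MCS Mschema (F.nu x)) ∧
  ConvWF F.R ∧
  (∀ x y z, F.R x y → F.R y z → F.R x z) ∧
  (∀ x y z, F.S x y z → F.R x y ∧ F.R x z) ∧
  (∀ x y, F.R x y → F.S x y y) ∧
  (∀ x y z, F.R x y → F.R y z → F.S x y z) ∧
  (∀ x u v w, F.S x u v → F.S x v w → F.S x u w) ∧
  -- the IL(M) frame condition
  (∀ x y z u, F.S x y z → F.R z u → F.R y u) ∧
  (∀ x y z, F.S x y z → boxSub (F.nu y) (F.nu z)) ∧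
  -- adequacy
  (∀ x y, F.R x y → prec (F.nu x) (F.nu y)) ∧
  (∀ x (A B : Formula), A ≠ B → ∀ y, ¬ (GenCone F x A y ∧ GenCone F x B y)) ∧
  (∀ x A y, CritCone F x A y → critSucc A (F.nu x) (F.nu y))

namespace ILMClosure

open Relation

variable (G : LabFrame)

/-- One step of the closed relation: an R-step or an S⁺;R-step. -/
def Step (a b : G.W) : Prop := G.R a b ∨ ∃ c, Str G a c ∧ G.R c b

/-- The closed relation R'. -/
def Rp (a b : G.W) : Prop := Relation.TransGen (Step G) a b

/-- The closed relation S'. -/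
def Sp (x y z : G.W) : Prop :=
  Rp G x y ∧ Rp G x z ∧ Relation.ReflTransGen (fun a b => Rp G a b ∨ G.S x a b) y z

variable {G}

lemma step_of_S {x y a b : G.W} (hs : G.S x y a) (h : Step G a b) : Step G y b := by
  rcases h with h | ⟨c, h1, h2⟩
  · exact Or.inr ⟨a, Relation.TransGen.single ⟨x, hs⟩, h⟩
  · exact Or.inr ⟨c, Relation.TransGen.head ⟨x, hs⟩ h1, h2⟩

lemma ilm_key {x y a u : G.W} (hs : G.S x y a) (h : Rp G a u) : Rp G y u := by
  obtain ⟨b, h1, h2⟩ := (Relation.TransGen.head'_iff).mp h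
  exact Relation.TransGen.head' (step_of_S hs h1) h2

lemma prec_trans {Γ Δ Θ : Set Formula} (h1 : prec Γ Δ) (h2 : prec Δ Θ) : prec Γ Θ :=
  fun A hA => h2 A (h1 A hA).2

lemma boxSub_prec {Γ Δ Θ : Set Formula} (h1 : boxSub Γ Δ) (h2 : prec Δ Θ) : prec Γ Θ :=
  fun A hA => h2 A (h1 A hA)

lemma prec_boxSub {Γ Δ : Set Formula} (h : prec Γ Δ) : boxSub Γ Δ :=
  fun A hA => (h A hA).2

lemma boxSub_trans {Γ Δ Θ : Set Formula} (h1 : boxSub Γ Δ) (h2 : boxSub Δ Θ) : boxSub Γ Θ :=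
  fun A hA => h2 A (h1 A hA)

section Quasi

variable (hG : QuasiILM G)

lemma boxSub_str (hG : QuasiILM G) {a b : G.W} (h : Str G a b) :
    boxSub (G.nu a) (G.nu b) := by
  induction h with
  | single h => obtain ⟨w, hw⟩ := h; exact hG.2.2.2.2.2.2.2.1 w _ _ hw
  | tail _ h ih =>
      obtain ⟨w, hw⟩ := h
      exact boxSub_trans ih (hG.2.2.2.2.2.2.2.1 w _ _ hw)

lemma prec_step (hG : QuasiILM G) {a b : G.W} (h : Step G a b) :
    prec (G.nu a) (G.nu b) := by
  rcases h with h | ⟨c, h1, h2⟩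
  · exact hG.2.2.2.1 a b h
  · exact boxSub_prec (boxSub_str hG h1) (hG.2.2.2.1 c b h2)

lemma prec_Rp (hG : QuasiILM G) {a b : G.W} (h : Rp G a b) :
    prec (G.nu a) (G.nu b) := by
  induction h with
  | single h => exact prec_step hG h
  | tail _ h ih => exact prec_trans ih (prec_step hG h)

/-- boxSub along a single S'-chain step. -/
lemma boxSub_spstep (hG : QuasiILM G) {x a b : G.W}
    (h : Rp G a b ∨ G.S x a b) : boxSub (G.nu a) (G.nu b) := by
  rcases h with h | h
  · exact prec_boxSub (prec_Rp hG h)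
  · exact hG.2.2.2.2.2.2.2.1 x a b h

/-- M-cones are closed under the new relations. -/
lemma mcone_step {x : G.W} {A : Formula} {y z : G.W}
    (h : MCone G x A y) (hs : Step G y z) : MCone G x A z := by
  rcases hs with hs | ⟨c, h1, h2⟩
  · exact h.r hs
  · exact h.str h1 h2

lemma mcone_Rp {x : G.W} {A : Formula} {y z : G.W}
    (h : MCone G x A y) (hs : Rp G y z) : MCone G x A z := by
  induction hs with
  | single hs => exact mcone_step h hs
  | tail _ hs ih => exact mcone_step ih hs

lemma mcone_Sp {x : G.W} {A : Formula} {y z : G.W}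
    (h : MCone G x A y) (hs : Sp G x y z) : MCone G x A z := by
  obtain ⟨-, -, hs⟩ := hs
  induction hs with
  | refl => exact h
  | tail _ hstep ih =>
      rcases hstep with hstep | hstep
      · exact mcone_Rp ih hstep
      · exact ih.s hstep

/-- Generalized cones are closed under the new relations. -/
lemma gen_str {x : G.W} {A : Formula} {y z : G.W}
    (h : GenCone G x A y) (hs : Str G y z) : GenCone G x A z := by
  induction hs with
  | single hs => obtain ⟨w, hw⟩ := hs; exact h.s hw
  | tail _ hs ih => obtain ⟨w, hw⟩ := hs; exact ih.s hw

lemma gen_step {x : G.W} {A : Formula} {y z : G.W}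
    (h : GenCone G x A y) (hs : Step G y z) : GenCone G x A z := by
  rcases hs with hs | ⟨c, h1, h2⟩
  · exact h.r hs
  · exact (gen_str h h1).r h2

lemma gen_Rp {x : G.W} {A : Formula} {y z : G.W}
    (h : GenCone G x A y) (hs : Rp G y z) : GenCone G x A z := by
  induction hs with
  | single hs => exact gen_step h hs
  | tail _ hs ih => exact gen_step ih hs

lemma gen_Sp {x : G.W} {A : Formula} {w y z : G.W}
    (h : GenCone G x A y) (hs : Sp G w y z) : GenCone G x A z := by
  obtain ⟨-, -, hs⟩ := hs
  induction hs with
  | refl => exact h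
  | tail _ hstep ih =>
      rcases hstep with hstep | hstep
      · exact gen_Rp ih hstep
      · exact ih.s hstep

end Quasi

/-- Well-founded flipped relation has no ascending chain. -/
lemma wf_no_chain {α : Type} {r : α → α → Prop}
    (hwf : WellFounded (fun a b => r b a)) (f : ℕ → α) :
    ¬ ∀ n, r (f n) (f (n + 1)) := by
  have key : ∀ a : α, ∀ g : ℕ → α, g 0 = a → ¬ ∀ n, r (g n) (g (n + 1)) := by
    intro a
    induction a using WellFounded.induction hwf with
    | _ a ih =>
      intro g h0 hg
      exact ih (g 1) (h0 ▸ hg 0) (fun n => g (n + 1)) rfl (fun n => hg (n + 1))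
  exact key (f 0) f rfl

/-- Converse of the above, using choice. -/
lemma no_chain_wf {α : Type} {r : α → α → Prop}
    (h : ∀ f : ℕ → α, ¬ ∀ n, r (f n) (f (n + 1))) :
    WellFounded (fun a b => r b a) := by
  by_contra hwf
  have hex : ∃ a, ¬ Acc (fun a b => r b a) a := by
    by_contra hall
    push_neg at hall
    exact hwf ⟨hall⟩
  obtain ⟨a, ha⟩ := hex
  have next : ∀ b : α, ¬ Acc (fun a b => r b a) b →
      ∃ c, r b c ∧ ¬ Acc (fun a b => r b a) c := by
    intro b hb
    by_contra hc
    push_neg at hc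
    exact hb (Acc.intro b (fun c hrc => hc c hrc))
  let f : ℕ → {x : α // ¬ Acc (fun a b => r b a) x} := fun n =>
    Nat.rec ⟨a, ha⟩
      (fun _ p => ⟨(next p.1 p.2).choose, (next p.1 p.2).choose_spec.2⟩) n
  exact h (fun n => (f n).1) (fun n => (next (f n).1 (f n).2).choose_spec.1)

end ILMClosure

namespace ILMClosure

open Relation

variable {G : LabFrame}

lemma wf_step (hG : QuasiILM G) : WellFounded (fun a b => Step G b a) := by
  classical
  apply no_chain_wf
  intro f hf
  by_cases hinf : ∀ N, ∃ n, N ≤ n ∧ ∃ c, Str G (f n) c ∧ G.R c (f (n + 1))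
  · -- infinitely many (S⁺;R)-steps: contradict ConvWF (Rtr;Str)
    let seq : ℕ → ℕ := fun k =>
      Nat.rec (Nat.find (hinf 0)) (fun _ m => Nat.find (hinf (m + 1))) k
    have hseq_succ : ∀ k, seq (k + 1) = Nat.find (hinf (seq k + 1)) := fun k => rfl
    have hPseq : ∀ k, ∃ c, Str G (f (seq k)) c ∧ G.R c (f (seq k + 1)) := by
      intro k
      cases k with
      | zero => exact (Nat.find_spec (hinf 0)).2
      | succ k => exact (Nat.find_spec (hinf (seq k + 1))).2
    have hlt : ∀ k, seq k + 1 ≤ seq (k + 1) := fun k => (Nat.find_spec (hinf (seq k + 1))).1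
    have hmin : ∀ k m, seq k + 1 ≤ m → m < seq (k + 1) →
        ¬ ∃ c, Str G (f m) c ∧ G.R c (f (m + 1)) := by
      intro k m h1 h2 hPm
      have := Nat.find_min (hinf (seq k + 1)) (by rw [← hseq_succ k]; exact h2)
      exact this ⟨h1, hPm⟩
    let c : ℕ → G.W := fun k => (hPseq k).choose
    have hc1 : ∀ k, Str G (f (seq k)) (c k) := fun k => (hPseq k).choose_spec.1
    have hc2 : ∀ k, G.R (c k) (f (seq k + 1)) := fun k => (hPseq k).choose_spec.2
    have key : ∀ k j, seq k + 1 + j ≤ seq (k + 1) → Rtr G (c k) (f (seq k + 1 + j)) := by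
      intro k j
      induction j with
      | zero => exact fun _ => Relation.TransGen.single (hc2 k)
      | succ j ih =>
          intro hle
          have hR : G.R (f (seq k + 1 + j)) (f (seq k + 1 + j + 1)) := by
            rcases hf (seq k + 1 + j) with h | h
            · exact h
            · exact absurd h (hmin k _ (by omega) (by omega))
          exact Relation.TransGen.tail (ih (by omega)) hR
    have hM : ∀ k, ∃ d, Rtr G (c k) d ∧ Str G d (c (k + 1)) := by
      intro k
      have h1 : seq k + 1 + (seq (k + 1) - (seq k + 1)) = seq (k + 1) := by
        have := hlt k; omega
      have h2 := key k (seq (k + 1) - (seq k + 1)) (by omega)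
      rw [h1] at h2
      exact ⟨f (seq (k + 1)), h2, hc1 (k + 1)⟩
    exact wf_no_chain hG.2.2.2.2.2.2.1 c hM
  · -- eventually all steps are R-steps: contradict ConvWF R
    push_neg at hinf
    obtain ⟨N, hN⟩ := hinf
    refine wf_no_chain hG.2.1 (fun k => f (N + k)) (fun k => ?_)
    rcases hf (N + k) with h | h
    · exact h
    · obtain ⟨c, h1, h2⟩ := h
      exact absurd h2 (hN (N + k) (Nat.le_add_right N k) c h1)

lemma wf_Rp (hG : QuasiILM G) : WellFounded (fun a b => Rp G b a) := by
  have h1 : WellFounded (Relation.TransGen (fun a b => Step G b a)) :=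
    (wf_step hG).transGen
  exact Subrelation.wf (fun {a b} h => (Relation.transGen_swap).mpr h) h1

lemma crit_sub {x : G.W} {A : Formula} {y : G.W}
    (h : CritCone ⟨G.W, Rp G, Sp G, G.nu, G.edge⟩ x A y) : MCone G x A y :=
  h.rec (fun h => MCone.base h) (fun _ h2 ih => mcone_Sp ih h2)
    (fun _ h2 ih => mcone_Rp ih h2)

lemma gen_crit_sub {x : G.W} {A : Formula} {y : G.W}
    (h : CritCone ⟨G.W, Rp G, Sp G, G.nu, G.edge⟩ x A y) : GenCone G x A y :=
  h.rec (fun h => GenCone.base (CritCone.base h)) (fun _ h2 ih => gen_Sp ih h2)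
    (fun _ h2 ih => gen_Rp ih h2)

lemma gen_sub {x : G.W} {A : Formula} {y : G.W}
    (h : GenCone ⟨G.W, Rp G, Sp G, G.nu, G.edge⟩ x A y) : GenCone G x A y :=
  h.rec (fun h => gen_crit_sub h) (fun _ h2 ih => gen_Sp ih h2)
    (fun _ h2 ih => gen_Rp ih h2)

end ILMClosure

/-- IL(M)-closure: every quasi-IL(M)-frame can be extended,
keeping the universe and labeling and enlarging only R and S, to an adequate
labeled IL(M)-frame. -/
theorem ilm_closure (G : LabFrame) (hG : QuasiILM G) :
    ∃ (R' : G.W → G.W → Prop) (S' : G.W → G.W → G.W → Prop),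
      (∀ x y, G.R x y → R' x y) ∧
      (∀ x y z, G.S x y z → S' x y z) ∧
      AdequateILM ⟨G.W, R', S', G.nu, G.edge⟩ := by
  classical
  refine ⟨ILMClosure.Rp G, ILMClosure.Sp G, ?_, ?_, ?_⟩
  · exact fun x y h => Relation.TransGen.single (Or.inl h)
  · intro x y z h
    exact ⟨Relation.TransGen.single (Or.inl (hG.2.2.1 x y z h).1),
           Relation.TransGen.single (Or.inl (hG.2.2.1 x y z h).2),
           Relation.ReflTransGen.single (Or.inr h)⟩
  · refine ⟨hG.1, ILMClosure.wf_Rp hG, ?_, ?_, ?_, ?_, ?_, ?_, ?_, ?_, ?_, ?_⟩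
    · exact fun x y z h1 h2 => h1.trans h2
    · exact fun x y z h => ⟨h.1, h.2.1⟩
    · exact fun x y h => ⟨h, h, Relation.ReflTransGen.refl⟩
    · exact fun x y z h1 h2 => ⟨h1, h1.trans h2, Relation.ReflTransGen.single (Or.inl h2)⟩
    · exact fun x u v w h1 h2 => ⟨h1.1, h2.2.1, h1.2.2.trans h2.2.2⟩
    · -- the IL(M) frame condition
      intro x y z u hS hR
      obtain ⟨-, -, hchain⟩ := hS
      induction hchain using Relation.ReflTransGen.head_induction_on with
      | refl => exact hR
      | head hstep _ ih =>
          rcases hstep with h | h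
          · exact h.trans ih
          · exact ILMClosure.ilm_key h ih
    · intro x y z hS
      obtain ⟨-, -, hchain⟩ := hS
      induction hchain with
      | refl => exact fun A hA => hA
      | tail _ hstep ih =>
          exact ILMClosure.boxSub_trans ih (ILMClosure.boxSub_spstep hG hstep)
    · exact fun x y h => ILMClosure.prec_Rp hG h
    · rintro x A B hne y ⟨h1, h2⟩
      exact hG.2.2.2.2.1 x A B hne y ⟨ILMClosure.gen_sub h1, ILMClosure.gen_sub h2⟩
    · intro x A y h
      exact hG.2.2.2.2.2.2.2.2 x A y (ILMClosure.crit_sub h)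
end
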